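/- Let A ∈ [0,1]^{n×n} and 0 < λ < 1. The set of Łukasiewicz eigenvectors of A associated with λ has a greatest element z with respect to the componentwise order. Moreover, setting L = {i : z_i < 1 − λ} and K = {i : z_i ≥ 1 − λ}, the partition (K,L) is secure with respect to D(A^(λ)), and every secure partition (K',L') of {1,…,n} with respect to D(A^(λ)) satisfies L ⊆ L'. -/

import Mathlib

open Finset

/-- Max-plus matrix-vector product: `(A ⊗ x)_i = max_j (a_{ij} + x_j)`. -/
noncomputable def mpMulVec {ι κ : Type*} [Fintype κ] (A : ι → κ → ℝ) (x : κ → ℝ) (i : ι) : ℝ :=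
  ⨆ j, (A i j + x j)

/-- Max-plus matrix-matrix product: `(A ⊗ B)_{ik} = max_j (a_{ij} + b_{jk})`. -/
noncomputable def mpMul {ι κ τ : Type*} [Fintype κ] (A : ι → κ → ℝ) (B : κ → τ → ℝ)
    (i : ι) (k : τ) : ℝ :=
  ⨆ j, (A i j + B j k)

/-- `mpPow1 A s` is the `(s+1)`-st max-plus power of `A`, i.e. `A^{⊗(s+1)}`. -/
noncomputable def mpPow1 {ι : Type*} [Fintype ι] (A : ι → ι → ℝ) : ℕ → ι → ι → ℝ
  | 0 => A
  | (k + 1) => mpMul A (mpPow1 A k)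

/-- Weight of the walk `P 0 → P 1 → ⋯ → P len` in the complete weighted digraph `D(B)`. -/
noncomputable def walkWeight {ι : Type*} (B : ι → ι → ℝ) (len : ℕ) (P : Fin (len + 1) → ι) : ℝ :=
  ∑ t : Fin len, B (P t.castSucc) (P t.succ)

/-- The maximum cycle mean `ρ(A)`: the maximum over all cycles (closed walks of length
`1 ≤ k ≤ n`) of the average weight of the cycle. -/
noncomputable def maxCycleMean {ι : Type*} [Fintype ι] (A : ι → ι → ℝ) : ℝ :=
  sSup { r | ∃ k, 1 ≤ k ∧ k ≤ Fintype.card ι ∧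
    ∃ P : Fin (k + 1) → ι, P 0 = P (Fin.last k) ∧ r = walkWeight A k P / (k : ℝ) }

/-- Kleene star of `A` (meaningful when `ρ(A) ≤ 0`):
`A*_{ii} = max(0, max_{1 ≤ k ≤ n-1} (A^{⊗k})_{ii})` and
`A*_{ij} = max_{1 ≤ k ≤ n-1} (A^{⊗k})_{ij}` for `i ≠ j`. -/
noncomputable def kleeneStar {ι : Type*} [Fintype ι] [DecidableEq ι] (A : ι → ι → ℝ)
    (i j : ι) : ℝ :=
  if i = j then max 0 (⨆ m : Fin (Fintype.card ι - 1), mpPow1 A (m : ℕ) i i)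
  else ⨆ m : Fin (Fintype.card ι - 1), mpPow1 A (m : ℕ) i j

/-- Max-Łukasiewicz matrix-vector product: `(A ⊗_L x)_i = max_j max(0, a_{ij} + x_j - 1)`. -/
noncomputable def lukMulVec {ι κ : Type*} [Fintype κ] (A : ι → κ → ℝ) (x : κ → ℝ) (i : ι) : ℝ :=
  ⨆ j, max 0 (A i j + x j - 1)

/-- Max-Łukasiewicz scalar action: `(λ ⊗_L x)_i = max(0, λ + x_i - 1)`. -/
noncomputable def lukSMul {ι : Type*} (lam : ℝ) (x : ι → ℝ) (i : ι) : ℝ :=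
  max 0 (lam + x i - 1)

/-- Max-Łukasiewicz matrix-matrix product: `(A ⊗_L B)_{ik} = max_j max(0, a_{ij} + b_{jk} - 1)`. -/
noncomputable def lukMul {ι κ τ : Type*} [Fintype κ] (A : ι → κ → ℝ) (B : κ → τ → ℝ)
    (i : ι) (k : τ) : ℝ :=
  ⨆ j, max 0 (A i j + B j k - 1)

/-- `lukPow1 A s` is the `(s+1)`-st Łukasiewicz power of `A`, i.e. `A^{⊗_L (s+1)}`. -/
noncomputable def lukPow1 {ι : Type*} [Fintype ι] (A : ι → ι → ℝ) : ℕ → ι → ι → ℝ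
  | 0 => A
  | (t + 1) => lukMul A (lukPow1 A t)

/-- Max-plus matrix-vector product of a real matrix with a vector over `ℝ ∪ {-∞}` (`EReal`). -/
noncomputable def mpMulVecE {ι κ : Type*} [Fintype κ] (A : ι → κ → ℝ) (v : κ → EReal)
    (i : ι) : EReal :=
  ⨆ j, ((A i j : EReal) + v j)

/-- Node `i` of the weighted digraph `D(B)` is secure if every walk starting at `i` has
nonpositive weight. -/
def SecureNode {ι : Type*} (B : ι → ι → ℝ) (i : ι) : Prop :=
  ∀ (len : ℕ) (P : Fin (len + 1) → ι), P 0 = i → walkWeight B len P ≤ 0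

/-- The partition `(K, L)` of `{1,…,n}` is secure with respect to `D(B)` (with parameter `λ`):
if `L = ∅` this means `D(B)` is `λ`-secure (every walk has weight `≤ λ`); otherwise it means
that every walk starting in `L` whose all other nodes lie in `K` has nonpositive weight.
(If `L` is everything, the latter condition holds trivially, matching the convention.) -/
def SecurePartition {n : ℕ} (B : Fin n → Fin n → ℝ) (lam : ℝ) (K L : Finset (Fin n)) : Prop :=
  if L = ∅ then
    ∀ (len : ℕ) (P : Fin (len + 1) → Fin n), walkWeight B len P ≤ lam
  else
    ∀ (len : ℕ) (P : Fin (len + 1) → Fin n),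
      P 0 ∈ L → (∀ t : Fin (len + 1), t ≠ 0 → P t ∈ K) → walkWeight B len P ≤ 0

/-!
The Łukasiewicz eigenvectors form a compact set closed under coordinatewise max, so the
maximisers of the single coordinates have a join `z`, the greatest eigenvector.

Any `z` with `A ⊗_L z ≤ λ ⊗_L z` bounds each edge `i → j` of `D(A^(λ))` by
`max(z_i, 1 - λ) - z_j`. Along a walk whose nodes after the first lie in `K = {z ≥ 1 - λ}`
this telescopes, which gives the security of `(K, L)`.

Conversely, if `(K', L')` is secure, the longest walks inside `K'` have weights `u_j ∈ [0, λ]`,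
and by Bellman's equation the vector equal to `1 - λ + u` on `K'` and to `0` on `L'` is an
eigenvector. Hence `z ≥ 1 - λ` on `K'`, that is `L ⊆ L'`.
-/

section Walks

variable {ι : Type*} (B : ι → ι → ℝ)

lemma walkWeight_cons (len : ℕ) (i : ι) (P : Fin (len + 1) → ι) :
    walkWeight B (len + 1) (Fin.cons i P) = B i (P 0) + walkWeight B len P := by
  simp [walkWeight, Fin.sum_univ_succ]

lemma walkWeight_le_sub_of_le {len : ℕ} {P : Fin (len + 1) → ι} (f : Fin (len + 1) → ℝ)
    (h : ∀ t : Fin len, B (P t.castSucc) (P t.succ) ≤ f t.castSucc - f t.succ) :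
    walkWeight B len P ≤ f 0 - f (Fin.last len) := by
  induction len with
  | zero => simp [walkWeight]
  | succ m ih =>
    have hinit := ih (P := P ∘ Fin.castSucc) (f ∘ Fin.castSucc) fun t => h t.castSucc
    have hlast := h (Fin.last m)
    simp only [walkWeight, Fin.sum_univ_castSucc, Function.comp_apply, Fin.succ_castSucc,
      Fin.castSucc_zero, Fin.succ_last] at hinit hlast ⊢
    linarith

def walkWeightsWithin (S : Set ι) (j : ι) : Set ℝ :=
  {w | ∃ (len : ℕ) (P : Fin (len + 1) → ι), P 0 = j ∧ (∀ t, P t ∈ S) ∧ walkWeight B len P = w}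

variable {B} {S : Set ι}

lemma zero_mem_walkWeightsWithin {j : ι} (hj : j ∈ S) : 0 ∈ walkWeightsWithin B S j :=
  ⟨0, fun _ => j, rfl, fun _ => hj, by simp [walkWeight]⟩

lemma exists_walk_cons_of_mem_walkWeightsWithin {j : ι} {w : ℝ}
    (hw : w ∈ walkWeightsWithin B S j) (i : ι) :
    ∃ (len : ℕ) (P : Fin (len + 1) → ι), P 0 = i ∧ (∀ t, t ≠ 0 → P t ∈ S) ∧
      walkWeight B len P = B i j + w := by
  obtain ⟨len, P, rfl, hPS, rfl⟩ := hw
  refine ⟨len + 1, Fin.cons i P, rfl, fun t ht => ?_, walkWeight_cons B len i P⟩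
  obtain ⟨s, rfl⟩ := Fin.exists_succ_eq.mpr ht
  simpa using hPS s

lemma add_mem_walkWeightsWithin {i j : ι} {w : ℝ} (hi : i ∈ S)
    (hw : w ∈ walkWeightsWithin B S j) : B i j + w ∈ walkWeightsWithin B S i := by
  obtain ⟨len, P, hP0, hPS, hPw⟩ := exists_walk_cons_of_mem_walkWeightsWithin hw i
  refine ⟨len, P, hP0, fun t => ?_, hPw⟩
  rcases eq_or_ne t 0 with rfl | ht
  · exact hP0 ▸ hi
  · exact hPS t ht

lemma eq_zero_or_exists_of_mem_walkWeightsWithin {i : ι} {w : ℝ}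
    (hw : w ∈ walkWeightsWithin B S i) :
    w = 0 ∨ ∃ j ∈ S, ∃ w' ∈ walkWeightsWithin B S j, w = B i j + w' := by
  obtain ⟨len, P, rfl, hPS, rfl⟩ := hw
  cases len with
  | zero => exact Or.inl (by simp [walkWeight])
  | succ m =>
    refine Or.inr ⟨P 1, hPS 1, _, ⟨m, Fin.tail P, rfl, fun t => hPS _, rfl⟩, ?_⟩
    conv_lhs => rw [← Fin.cons_self_tail P]
    exact walkWeight_cons B m (P 0) (Fin.tail P)

lemma sSup_walkWeightsWithin_le_iff {i : ι} (hi : i ∈ S)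
    (hbdd : ∀ j, BddAbove (walkWeightsWithin B S j)) {M : ℝ} :
    sSup (walkWeightsWithin B S i) ≤ M ↔
      0 ≤ M ∧ ∀ j ∈ S, B i j + sSup (walkWeightsWithin B S j) ≤ M := by
  constructor
  · intro h
    refine ⟨(le_csSup (hbdd i) (zero_mem_walkWeightsWithin hi)).trans h, fun j hj => ?_⟩
    suffices sSup (walkWeightsWithin B S j) ≤ M - B i j by linarith
    refine csSup_le ⟨0, zero_mem_walkWeightsWithin hj⟩ fun w hw => ?_
    linarith [le_csSup (hbdd i) (add_mem_walkWeightsWithin hi hw)]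
  · rintro ⟨hM, hstep⟩
    refine csSup_le ⟨0, zero_mem_walkWeightsWithin hi⟩ fun w hw => ?_
    obtain rfl | ⟨j, hj, w', hw', rfl⟩ := eq_zero_or_exists_of_mem_walkWeightsWithin hw
    · exact hM
    · linarith [le_csSup (hbdd j) hw', hstep j hj]

end Walks

section Lukasiewicz

variable {ι κ : Type*} [Fintype κ] (A : ι → κ → ℝ)

lemma le_lukMulVec (x : κ → ℝ) (i : ι) (j : κ) : A i j + x j - 1 ≤ lukMulVec A x i :=
  (le_max_right _ _).trans <|
    le_ciSup (f := fun j => max 0 (A i j + x j - 1)) (Set.finite_range _).bddAbove j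

lemma lukMulVec_nonneg (x : κ → ℝ) (i : ι) : 0 ≤ lukMulVec A x i :=
  Real.iSup_nonneg fun _ => le_max_left _ _

lemma lukMulVec_le {x : κ → ℝ} {i : ι} {M : ℝ} (hM : 0 ≤ M) (h : ∀ j, A i j + x j - 1 ≤ M) :
    lukMulVec A x i ≤ M :=
  Real.iSup_le (fun j => max_le hM (h j)) hM

lemma lukMulVec_sup (x y : κ → ℝ) (i : ι) :
    lukMulVec A (x ⊔ y) i = lukMulVec A x i ⊔ lukMulVec A y i := by
  have hmono : ∀ j, Monotone fun t => max 0 (A i j + t - 1) := fun j s t hst =>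
    max_le_max le_rfl (by linarith)
  simp only [lukMulVec, Pi.sup_apply, (hmono _).map_max]
  exact ciSup_sup_eq (Set.finite_range _).bddAbove (Set.finite_range _).bddAbove

lemma lukSMul_sup (lam : ℝ) (x y : ι → ℝ) (i : ι) :
    lukSMul lam (x ⊔ y) i = lukSMul lam x i ⊔ lukSMul lam y i :=
  (show Monotone fun t => max 0 (lam + t - 1) from fun s t hst =>
    max_le_max le_rfl (by linarith)).map_max

lemma lukSMul_eq (lam : ℝ) (x : ι → ℝ) (i : ι) :
    lukSMul lam x i = max (x i) (1 - lam) + lam - 1 := by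
  rw [lukSMul, max_comm, ← max_add_add_right, ← max_sub_sub_right]
  ring_nf

lemma lukSMul_indicator {lam : ℝ} {S : Set ι} {u : ι → ℝ} (hlam : lam ≤ 1)
    (hu : ∀ j ∈ S, 0 ≤ u j) :
    lukSMul lam (S.indicator fun j => 1 - lam + u j) = S.indicator u := by
  ext i
  by_cases hi : i ∈ S
  · simp only [lukSMul, Set.indicator_of_mem hi]
    rw [show lam + (1 - lam + u i) - 1 = u i by ring]
    exact max_eq_right (hu i hi)
  · simp only [lukSMul, Set.indicator_of_notMem hi]
    exact max_eq_left (by linarith)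

lemma continuous_lukMulVec [Nonempty κ] (i : ι) : Continuous fun x => lukMulVec A x i := by
  simp only [lukMulVec, ← Finset.sup'_univ_eq_ciSup]
  exact Continuous.finset_sup'_apply _ fun j _ => by fun_prop

end Lukasiewicz

section Eigenvectors

variable {ι : Type*} [Fintype ι] (A : ι → ι → ℝ) (lam : ℝ)

def lukEigenvectors : Set (ι → ℝ) :=
  {x | (∀ i, x i ∈ Set.Icc 0 1) ∧ ∀ i, lukMulVec A x i = lukSMul lam x i}

lemma supClosed_lukEigenvectors : SupClosed (lukEigenvectors A lam) := by
  rintro x ⟨hx01, hx⟩ y ⟨hy01, hy⟩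
  refine ⟨fun i => ⟨le_sup_of_le_left (hx01 i).1, sup_le (hx01 i).2 (hy01 i).2⟩, fun i => ?_⟩
  rw [lukMulVec_sup, lukSMul_sup, hx, hy]

lemma isCompact_lukEigenvectors [Nonempty ι] : IsCompact (lukEigenvectors A lam) := by
  refine (isCompact_univ_pi fun _ => isCompact_Icc).of_isClosed_subset ?_
    fun x hx i _ => hx.1 i
  simp only [lukEigenvectors, Set.ofPred_and, Set.ofPred_forall]
  exact (isClosed_iInter fun i => isClosed_Icc.preimage (continuous_apply i)).inter
    (isClosed_iInter fun i => isClosed_eq (continuous_lukMulVec A i) (by unfold lukSMul; fun_prop))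

variable {A lam}

lemma zero_mem_lukEigenvectors (hA : ∀ i j, A i j ≤ 1) (hlam : lam ≤ 1) :
    0 ∈ lukEigenvectors A lam := by
  refine ⟨fun _ => ⟨le_rfl, zero_le_one⟩, fun i => ?_⟩
  have hrhs : lukSMul lam 0 i = 0 := max_eq_left (by simp; linarith)
  rw [hrhs]
  exact le_antisymm (lukMulVec_le A le_rfl fun j => by simp; linarith [hA i j])
    (lukMulVec_nonneg A 0 i)

lemma exists_isGreatest_lukEigenvectors [Nonempty ι] (hA : ∀ i j, A i j ≤ 1) (hlam : lam ≤ 1) :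
    ∃ z, IsGreatest (lukEigenvectors A lam) z := by
  have hmax : ∀ i, ∃ x ∈ lukEigenvectors A lam, IsMaxOn (fun y => y i) (lukEigenvectors A lam) x :=
    fun i => (isCompact_lukEigenvectors A lam).exists_isMaxOn
      ⟨0, zero_mem_lukEigenvectors hA hlam⟩ (continuous_apply i).continuousOn
  choose x hx hxmax using hmax
  refine ⟨Finset.univ.sup' Finset.univ_nonempty x,
    (supClosed_lukEigenvectors A lam).finsetSup'_mem _ fun i _ => hx i, fun y hy i => ?_⟩
  rw [Finset.sup'_apply]
  exact (hxmax i hy).trans (Finset.le_sup' (fun k => x k i) (Finset.mem_univ i))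

lemma walkWeight_le_of_lukMulVec_le {z : ι → ℝ} (hz : ∀ i, lukMulVec A z i ≤ lukSMul lam z i)
    {len : ℕ} {P : Fin (len + 1) → ι} (hP : ∀ t, t ≠ 0 → 1 - lam ≤ z (P t)) :
    walkWeight (fun i j => A i j - lam) len P ≤
      max (z (P 0)) (1 - lam) - max (z (P (Fin.last len))) (1 - lam) := by
  refine walkWeight_le_sub_of_le _ (fun t => max (z (P t)) (1 - lam)) fun t => ?_
  have hedge := (le_lukMulVec A z _ (P t.succ)).trans (hz (P t.castSucc))
  rw [lukSMul_eq] at hedge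
  rw [max_eq_left (hP t.succ (Fin.succ_ne_zero t))]
  linarith

end Eigenvectors

section IndicatorEigenvector

variable {ι : Type*} [Fintype ι] {A : ι → ι → ℝ} {lam : ℝ} {S : Set ι} {u : ι → ℝ}

lemma lukMulVec_indicator_le (hA : ∀ i j, A i j ≤ 1) {i : ι} {M : ℝ} (hM : 0 ≤ M)
    (h : ∀ j ∈ S, A i j - lam + u j ≤ M) :
    lukMulVec A (S.indicator fun j => 1 - lam + u j) i ≤ M := by
  refine lukMulVec_le A hM fun j => ?_
  by_cases hj : j ∈ S
  · rw [Set.indicator_of_mem hj]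
    linarith [h j hj]
  · rw [Set.indicator_of_notMem hj]
    linarith [hA i j]

lemma le_lukMulVec_indicator (i : ι) {j : ι} (hj : j ∈ S) :
    A i j - lam + u j ≤ lukMulVec A (S.indicator fun j => 1 - lam + u j) i := by
  have h := le_lukMulVec A (S.indicator fun j => 1 - lam + u j) i j
  rw [Set.indicator_of_mem hj] at h
  linarith

lemma indicator_sSup_walkWeightsWithin_mem_lukEigenvectors (hA : ∀ i j, A i j ≤ 1)
    (hlam : lam ≤ 1) (hle : ∀ j, ∀ w ∈ walkWeightsWithin (fun i j => A i j - lam) S j, w ≤ lam)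
    (hblocked : ∀ i ∉ S, ∀ j ∈ S, ∀ w ∈ walkWeightsWithin (fun i j => A i j - lam) S j,
      A i j - lam + w ≤ 0) :
    (S.indicator fun j => 1 - lam + sSup (walkWeightsWithin (fun i j => A i j - lam) S j)) ∈
      lukEigenvectors A lam := by
  set W := walkWeightsWithin (fun i j => A i j - lam) S
  have hbdd : ∀ j, BddAbove (W j) := fun j => ⟨lam, hle j⟩
  have hu0 : ∀ j ∈ S, 0 ≤ sSup (W j) := fun j hj =>
    le_csSup (hbdd j) (zero_mem_walkWeightsWithin hj)
  have hulam : ∀ j ∈ S, sSup (W j) ≤ lam := fun j hj =>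
    csSup_le ⟨0, zero_mem_walkWeightsWithin hj⟩ (hle j)
  refine ⟨fun j => ?_, fun i => ?_⟩
  · by_cases hj : j ∈ S
    · rw [Set.indicator_of_mem hj]
      constructor <;> linarith [hu0 j hj, hulam j hj]
    · simp [Set.indicator_of_notMem hj]
  rw [lukSMul_indicator hlam hu0]
  by_cases hi : i ∈ S
  · rw [Set.indicator_of_mem hi]
    refine le_antisymm (lukMulVec_indicator_le hA (hu0 i hi) fun j hj => ?_) ?_
    · exact ((sSup_walkWeightsWithin_le_iff hi hbdd).mp le_rfl).2 j hj
    · refine (sSup_walkWeightsWithin_le_iff hi hbdd).mpr ⟨lukMulVec_nonneg A _ i, fun j hj => ?_⟩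
      exact le_lukMulVec_indicator (u := fun j => sSup (W j)) i hj
  · rw [Set.indicator_of_notMem hi]
    refine le_antisymm (lukMulVec_indicator_le hA le_rfl fun j hj => ?_) (lukMulVec_nonneg A _ i)
    have hsup : sSup (W j) ≤ -(A i j - lam) :=
      csSup_le ⟨0, zero_mem_walkWeightsWithin hj⟩ fun w hw => by linarith [hblocked i hi j hj w hw]
    linarith

end IndicatorEigenvector

section SecurePartition

variable {n : ℕ} {A : Fin n → Fin n → ℝ} {lam : ℝ}

lemma securePartition_of_mem_lukEigenvectors {z : Fin n → ℝ}
    (hz : z ∈ lukEigenvectors A lam) :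
    SecurePartition (fun i j => A i j - lam) lam
      (Finset.univ.filter fun i => 1 - lam ≤ z i)
      (Finset.univ.filter fun i => z i < 1 - lam) := by
  have hsub : ∀ i, lukMulVec A z i ≤ lukSMul lam z i := fun i => (hz.2 i).le
  unfold SecurePartition
  split_ifs with hL
  · have hK : ∀ i, 1 - lam ≤ z i := fun i => by
      simpa using Finset.filter_eq_empty_iff.mp hL (Finset.mem_univ i)
    intro len P
    have hw := walkWeight_le_of_lukMulVec_le hsub (P := P) fun t _ => hK _
    rw [max_eq_left (hK _), max_eq_left (hK _)] at hw
    linarith [(hz.1 (P 0)).2, hK (P (Fin.last len))]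
  · intro len P hP0 hPK
    simp only [Finset.mem_filter, Finset.mem_univ, true_and] at hP0 hPK
    have hw := walkWeight_le_of_lukMulVec_le hsub hPK
    rw [max_eq_right hP0.le] at hw
    linarith [le_max_right (z (P (Fin.last len))) (1 - lam)]

lemma SecurePartition.add_le_zero {K L : Finset (Fin n)}
    (hsec : SecurePartition (fun i j => A i j - lam) lam K L) {i j : Fin n} (hi : i ∈ L)
    {w : ℝ} (hw : w ∈ walkWeightsWithin (fun i j => A i j - lam) K j) : A i j - lam + w ≤ 0 := by
  rw [SecurePartition, if_neg (Finset.ne_empty_of_mem hi)] at hsec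
  obtain ⟨len, P, hP0, hPK, hPw⟩ := exists_walk_cons_of_mem_walkWeightsWithin hw i
  exact hPw ▸ hsec len P (hP0 ▸ hi) hPK

lemma SecurePartition.le_of_mem_walkWeightsWithin {K L : Finset (Fin n)}
    (hsec : SecurePartition (fun i j => A i j - lam) lam K L) (hA : ∀ i j, 0 ≤ A i j)
    {j : Fin n} {w : ℝ} (hw : w ∈ walkWeightsWithin (fun i j => A i j - lam) K j) : w ≤ lam := by
  by_cases hL : L = ∅
  · rw [SecurePartition, if_pos hL] at hsec
    obtain ⟨len, P, -, -, rfl⟩ := hw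
    exact hsec len P
  · obtain ⟨i, hi⟩ := Finset.nonempty_iff_ne_empty.mpr hL
    linarith [hsec.add_le_zero hi hw, hA i j]

lemma SecurePartition.exists_mem_lukEigenvectors {K L : Finset (Fin n)}
    (hsec : SecurePartition (fun i j => A i j - lam) lam K L) (hKL : K ∪ L = Finset.univ)
    (hA : ∀ i j, A i j ∈ Set.Icc (0 : ℝ) 1) (hlam : lam ≤ 1) :
    ∃ x ∈ lukEigenvectors A lam, ∀ i ∈ K, 1 - lam ≤ x i := by
  have hle : ∀ j, ∀ w ∈ walkWeightsWithin (fun i j => A i j - lam) K j, w ≤ lam :=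
    fun _ _ hw => hsec.le_of_mem_walkWeightsWithin (fun i j => (hA i j).1) hw
  refine ⟨_, indicator_sSup_walkWeightsWithin_mem_lukEigenvectors (fun i j => (hA i j).2) hlam
    hle fun i hi j _ w hw => ?_, fun i hi => ?_⟩
  · have hiL : i ∈ L := (Finset.mem_union.mp (hKL ▸ Finset.mem_univ i)).resolve_left hi
    exact hsec.add_le_zero hiL hw
  · rw [Set.indicator_of_mem (Finset.mem_coe.mpr hi)]
    linarith [le_csSup ⟨lam, hle i⟩ (zero_mem_walkWeightsWithin (Finset.mem_coe.mpr hi))]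

end SecurePartition

theorem stmt16_general {n : ℕ} (hn : 0 < n) (A : Fin n → Fin n → ℝ)
    (hA : ∀ i j, A i j ∈ Set.Icc (0 : ℝ) 1)
    (lam : ℝ) (hlam1 : lam < 1) :
    ∃ z : Fin n → ℝ,
      ((∀ i, z i ∈ Set.Icc (0 : ℝ) 1) ∧ ∀ i, lukMulVec A z i = lukSMul lam z i) ∧
      (∀ x : Fin n → ℝ,
        ((∀ i, x i ∈ Set.Icc (0 : ℝ) 1) ∧ ∀ i, lukMulVec A x i = lukSMul lam x i) → x ≤ z) ∧
      SecurePartition (fun i j => A i j - lam) lam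
        (Finset.univ.filter fun i => 1 - lam ≤ z i)
        (Finset.univ.filter fun i => z i < 1 - lam) ∧
      ∀ K' L' : Finset (Fin n), Disjoint K' L' → K' ∪ L' = Finset.univ →
        SecurePartition (fun i j => A i j - lam) lam K' L' →
        (Finset.univ.filter fun i => z i < 1 - lam) ⊆ L' := by
  have : Nonempty (Fin n) := Fin.pos_iff_nonempty.mp hn
  obtain ⟨z, hz, hzmax⟩ := exists_isGreatest_lukEigenvectors (fun i j => (hA i j).2) hlam1.le
  refine ⟨z, hz, hzmax, securePartition_of_mem_lukEigenvectors hz, ?_⟩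
  intro K' L' _ hKL hsec i hi
  obtain ⟨x, hx, hxK⟩ := hsec.exists_mem_lukEigenvectors hKL hA hlam1.le
  have hzi : z i < 1 - lam := (Finset.mem_filter.mp hi).2
  by_contra hiL
  have hiK : i ∈ K' := (Finset.mem_union.mp (hKL ▸ Finset.mem_univ i)).resolve_right hiL
  linarith [hxK i hiK, hzmax hx i]

/-- the set of Łukasiewicz eigenvectors associated with `λ ∈ (0,1)` has a greatest
element `z`; the partition `K = {i : z_i ≥ 1-λ}`, `L = {i : z_i < 1-λ}` is secure w.r.t.
`D(A^{(λ)})`, and every secure partition `(K',L')` satisfies `L ⊆ L'`. -/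
theorem stmt16 {n : ℕ} (hn : 0 < n) (A : Fin n → Fin n → ℝ)
    (hA : ∀ i j, A i j ∈ Set.Icc (0 : ℝ) 1)
    (lam : ℝ) (hlam0 : 0 < lam) (hlam1 : lam < 1) :
    ∃ z : Fin n → ℝ,
      ((∀ i, z i ∈ Set.Icc (0 : ℝ) 1) ∧ ∀ i, lukMulVec A z i = lukSMul lam z i) ∧
      (∀ x : Fin n → ℝ,
        ((∀ i, x i ∈ Set.Icc (0 : ℝ) 1) ∧ ∀ i, lukMulVec A x i = lukSMul lam x i) → x ≤ z) ∧
      SecurePartition (fun i j => A i j - lam) lam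
        (Finset.univ.filter fun i => 1 - lam ≤ z i)
        (Finset.univ.filter fun i => z i < 1 - lam) ∧
      ∀ K' L' : Finset (Fin n), Disjoint K' L' → K' ∪ L' = Finset.univ →
        SecurePartition (fun i j => A i j - lam) lam K' L' →
        (Finset.univ.filter fun i => z i < 1 - lam) ⊆ L' :=
  stmt16_general hn A hA lam hlam1
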